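/- arXiv:2004.05511 — 4 statements merged into one kernel-verified Lean document; each statement's English description precedes it below -/
import Mathlib

section
/- Let Θ = ⟨c, V, P⟩ be a star set in ℝⁿ and fix an index i. Define the stepReLU output at index i as the function mapping x to x with coordinate i replaced by max(0, xᵢ). Then the image of Θ under stepReLUᵢ equals Θ₁ ∪ Θ₂, where Θ₁ = ⟨c, V, P₁⟩ with P₁(α) = P(α) ∧ (cᵢ + Σⱼ αⱼ vⱼᵢ ≥ 0), and Θ₂ = ⟨c', V', P₂⟩ with P₂(α) = P(α) ∧ (cᵢ + Σⱼ αⱼ vⱼᵢ ≤ 0), and c', V' equal c, V with the i-th coordinate of the center and of every generator set to 0. -/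
def starSet {n m : ℕ} (c : Fin n → ℝ) (V : Fin m → Fin n → ℝ)
    (P : (Fin m → ℝ) → Prop) : Set (Fin n → ℝ) :=
  {x | ∃ α : Fin m → ℝ, x = c + ∑ j, α j • V j ∧ P α}

lemma coord_eval {n m : ℕ} (c : Fin n → ℝ) (V : Fin m → Fin n → ℝ)
    (α : Fin m → ℝ) (k : Fin n) :
    (c + ∑ j, α j • V j) k = c k + ∑ j, α j * V j k := by
  simp [Finset.sum_apply]

/-- Exact stepReLU on a star set: the image under ReLU applied only at coordinate i
equals the union of two star sets obtained by splitting on the sign of the i-th pixel. -/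
theorem starSet_stepReLU {n m : ℕ} (c : Fin n → ℝ) (V : Fin m → Fin n → ℝ)
    (P : (Fin m → ℝ) → Prop) (i : Fin n) :
    (fun x => Function.update x i (max 0 (x i))) '' starSet c V P
      = starSet c V (fun α => P α ∧ 0 ≤ c i + ∑ j, α j * V j i)
        ∪ starSet (Function.update c i 0) (fun j => Function.update (V j) i 0)
            (fun α => P α ∧ c i + ∑ j, α j * V j i ≤ 0) := by
  ext y
  constructor
  · rintro ⟨x, ⟨α, rfl, hP⟩, rfl⟩
    rcases le_total 0 ((c + ∑ j, α j • V j) i) with h | h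
    · left
      refine ⟨α, ?_, hP, by rw [coord_eval] at h; exact h⟩
      simp only [max_eq_right h, Function.update_eq_self]
    · right
      refine ⟨α, ?_, hP, by rw [coord_eval] at h; exact h⟩
      funext k
      by_cases hk : k = i
      · subst hk
        simp [max_eq_left h, coord_eval, Finset.sum_apply]
        rw [coord_eval] at h; exact h
      · simp [Function.update_of_ne hk, coord_eval, Finset.sum_apply]
  · rintro (⟨α, rfl, hP, h⟩ | ⟨α, rfl, hP, h⟩)
    · refine ⟨c + ∑ j, α j • V j, ⟨α, rfl, hP⟩, ?_⟩
      have h' : 0 ≤ (c + ∑ j, α j • V j) i := by rw [coord_eval]; exact h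
      simp only [max_eq_right h', Function.update_eq_self]
    · refine ⟨c + ∑ j, α j • V j, ⟨α, rfl, hP⟩, ?_⟩
      have h' : (c + ∑ j, α j • V j) i ≤ 0 := by rw [coord_eval]; exact h
      funext k
      by_cases hk : k = i
      · subst hk
        simp [max_eq_left h', coord_eval, Finset.sum_apply]
        exact h
      · simp [Function.update_of_ne hk, coord_eval, Finset.sum_apply]
end

section
/- Let Θ = ⟨c, V, P⟩ be a star set in ℝⁿ where P is a conjunction of linear constraints C α ≤ d over α ∈ ℝᵐ. The over-approximate ReLU step at index i (when a split occurs) defined by: Θ' = ⟨c', (V', eᵢ-direction new generator), P'⟩ with a fresh predicate variable β constrained by β ≥ 0, β ≥ cᵢ + Σⱼ αⱼ vⱼᵢ, and β ≤ (uᵢ/(uᵢ−lᵢ))·(cᵢ + Σⱼ αⱼ vⱼᵢ − lᵢ), where [lᵢ, uᵢ] bounds the i-th coordinate over Θ with lᵢ < 0 < uᵢ, satisfies: the image of Θ under stepReLUᵢ is a subset of Θ' (soundness of approxStepReLU). -/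
theorem max_zero_le_div_sub_mul {K : Type*} [Field K] [LinearOrder K] [IsStrictOrderedRing K]
    {l u t : K} (hl : l < 0) (hu : 0 < u) (hlt : l ≤ t) (htu : t ≤ u) :
    max 0 t ≤ u / (u - l) * (t - l) := by
  rw [div_mul_eq_mul_div, le_div_iff₀ (by linarith)]
  rcases le_total t 0 with ht | ht
  · rw [max_eq_left ht]; nlinarith
  · rw [max_eq_right ht]; nlinarith

section SumSmul

variable {ι κ R : Type*} [Semiring R]

theorem sum_smul_apply [Fintype ι] (α : ι → R) (V : ι → κ → R) (k : κ) :
    (∑ j, α j • V j) k = ∑ j, α j * V j k := by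
  simp only [Finset.sum_apply, Pi.smul_apply, smul_eq_mul]

theorem update_add_sum_smul [Fintype ι] [DecidableEq κ] (c : κ → R) (α : ι → R)
    (V : ι → κ → R) (i : κ) (b : R) :
    Function.update (c + ∑ j, α j • V j) i b
      = Function.update c i 0 + ∑ j, α j • Function.update (V j) i 0 + b • Pi.single i 1 := by
  funext k
  by_cases hk : k = i
  · subst hk; simp
  · simp [Function.update_of_ne hk, Pi.single_eq_of_ne hk]

theorem sum_snoc_smul_snoc {m : ℕ} (α : Fin m → R) (b : R) (W : Fin m → κ → R) (w : κ → R) :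
    ∑ k, Fin.snoc (α := fun _ => R) α b k • Fin.snoc (α := fun _ => κ → R) W w k
      = ∑ j, α j • W j + b • w := by
  simp [Fin.sum_univ_castSucc]

end SumSmul

/-- Soundness of the approxStepReLU operation: the exact stepReLU image at coordinate i
is contained in the over-approximate star set obtained by zeroing the i-th coordinate of
the center and all old generators, adding the new generator eᵢ with a fresh predicate
variable β subject to the three triangle constraints. -/
theorem approxStepReLU_sound {n m : ℕ} (c : Fin n → ℝ) (V : Fin m → Fin n → ℝ)
    (P : (Fin m → ℝ) → Prop) (i : Fin n) (l u : ℝ) (hl : l < 0) (hu : 0 < u)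
    (hbound : ∀ x ∈ starSet c V P, l ≤ x i ∧ x i ≤ u) :
    (fun x => Function.update x i (max 0 (x i))) '' starSet c V P
      ⊆ starSet (Function.update c i 0)
          (Fin.snoc (fun j : Fin m => Function.update (V j) i 0) (Pi.single i (1 : ℝ)))
          (fun α' : Fin (m + 1) → ℝ =>
            P (fun j => α' j.castSucc)
            ∧ 0 ≤ α' (Fin.last m)
            ∧ c i + ∑ j, α' j.castSucc * V j i ≤ α' (Fin.last m)
            ∧ α' (Fin.last m)
                ≤ u / (u - l) * (c i + (∑ j, α' j.castSucc * V j i) - l)) := by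
  rintro _ ⟨x, hx, rfl⟩
  obtain ⟨α, rfl, hP⟩ := id hx
  have hxi : (c + ∑ j, α j • V j) i = c i + ∑ j, α j * V j i := by
    rw [Pi.add_apply, sum_smul_apply]
  obtain ⟨hlt, htu⟩ := hbound _ hx
  beta_reduce
  rw [hxi] at hlt htu ⊢
  refine ⟨Fin.snoc α (max 0 (c i + ∑ j, α j * V j i)), ?_, ?_, ?_, ?_, ?_⟩
  · rw [sum_snoc_smul_snoc, ← add_assoc, update_add_sum_smul]
  · simpa using hP
  · simp
  · simp
  · simpa using max_zero_le_div_sub_mul hl hu hlt htu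
end

section
/- Let Θ = ⟨c, V, P⟩ be a star set in ℝⁿ and consider a max-pooling-style operation over an index set S ⊆ {1,…,n} producing output max_{i∈S} xᵢ. Then the exact image of this max over Θ equals the union over i ∈ S of the star sets Θᵢ = ⟨cᵢ (as output center), (v₁ᵢ,…,vₘᵢ) (as output generators), Pᵢ⟩, where Pᵢ(α) = P(α) ∧ ⋀_{j∈S} (cᵢ + Σₖ αₖ vₖᵢ ≥ cⱼ + Σₖ αₖ vₖⱼ). -/
/-- Exact max-pooling reachability over a region S: the image of the max over the star
set equals the union, over each max-point candidate i ∈ S, of the scalar star sets with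
center cᵢ, generators (vₖᵢ)ₖ, and added dominance constraints. -/
theorem starSet_maxPool_exact {n m : ℕ} (c : Fin n → ℝ) (V : Fin m → Fin n → ℝ)
    (P : (Fin m → ℝ) → Prop) (S : Finset (Fin n)) (hS : S.Nonempty) :
    (fun x => S.sup' hS (fun i => x i)) '' starSet c V P
      = ⋃ i ∈ S, {β : ℝ | ∃ α : Fin m → ℝ,
          β = c i + ∑ k, α k * V k i
          ∧ P α
          ∧ ∀ j ∈ S, c j + ∑ k, α k * V k j ≤ c i + ∑ k, α k * V k i} := by
  ext β
  simp only [Set.mem_image, Set.mem_iUnion, Set.mem_setOf_eq, starSet]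
  constructor
  · rintro ⟨x, ⟨α, rfl, hP⟩, rfl⟩
    have hx : ∀ j : Fin n, (c + ∑ k, α k • V k) j = c j + ∑ k, α k * V k j := by
      intro j; simp [Finset.sum_apply]
    obtain ⟨i, hi, hsup⟩ := Finset.exists_mem_eq_sup' hS (fun i => (c + ∑ k, α k • V k) i)
    refine ⟨i, hi, α, by rw [hsup, hx], hP, fun j hj => ?_⟩
    rw [← hx, ← hx, ← hsup]
    exact Finset.le_sup' _ hj
  · rintro ⟨i, hi, α, rfl, hP, hdom⟩
    refine ⟨c + ∑ k, α k • V k, ⟨α, rfl, hP⟩, ?_⟩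
    have hx : ∀ j : Fin n, (c + ∑ k, α k • V k) j = c j + ∑ k, α k * V k j := by
      intro j; simp [Finset.sum_apply]
    apply le_antisymm
    · exact Finset.sup'_le _ _ fun j hj => by rw [hx]; exact hdom j hj
    · rw [← hx]; exact Finset.le_sup' _ hi
end

section
/- Let Θ be a star set in ℝⁿ, S ⊆ {1,…,n} a pooling region, and u an upper bound with xᵢ ≤ u for all i ∈ S and x ∈ Θ. The over-approximate max-pooling output set Θ' = {β ∈ ℝ | ∃ α with P(α), β ≥ cᵢ + Σₖ αₖ vₖᵢ for all i ∈ S, and β ≤ u} contains the exact output set {max_{i∈S} xᵢ | x ∈ Θ} (soundness of the approximate max-pooling with a fresh predicate variable). -/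
/-- Soundness of approximate max-pooling with a fresh predicate variable: the exact
set of region maxima is contained in the over-approximate output set. -/
theorem approxMaxPool_sound {n m : ℕ} (c : Fin n → ℝ) (V : Fin m → Fin n → ℝ)
    (P : (Fin m → ℝ) → Prop) (S : Finset (Fin n)) (hS : S.Nonempty) (u : ℝ)
    (hu : ∀ x ∈ starSet c V P, ∀ i ∈ S, x i ≤ u) :
    (fun x => S.sup' hS (fun i => x i)) '' starSet c V P
      ⊆ {β : ℝ | ∃ α : Fin m → ℝ, P α
          ∧ (∀ i ∈ S, c i + ∑ k, α k * V k i ≤ β) ∧ β ≤ u} := by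
  rintro β ⟨x, hx, rfl⟩
  obtain ⟨α, hxe, hP⟩ := hx
  have hxi : ∀ i, x i = c i + ∑ k, α k * V k i := by
    intro i
    rw [hxe]
    simp [Finset.sum_apply]
  refine ⟨α, hP, ?_, ?_⟩
  · intro i hi
    rw [← hxi i]
    exact Finset.le_sup' _ hi
  · obtain ⟨i, hi, hmax⟩ := Finset.exists_mem_eq_sup' hS (fun i => x i)
    show S.sup' hS (fun i => x i) ≤ u
    rw [hmax]
    exact hu x ⟨α, hxe, hP⟩ i hi
end
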